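/- arXiv:1708.03608 — 8 statements merged into one kernel-verified Lean document; each statement's English description precedes it below -/
import Mathlib

section
/- If x is a k-sparse vector in R^n and A is a binary m×n matrix in which every column has exactly q ones and any two distinct columns have inner product at most r-1, then for any index j not in the support of x, the reduced measurement vector ȳ_j (the sub-vector of y = Ax consisting of the q entries y_i for rows i where A_{ij} = 1) has at most k(r-1) nonzero components. -/
/-!
A row `i` with `A i j = 1` and `y i ≠ 0` must meet some column `t` in the support of `x`
(`y i = ∑ₜ A i t x t`), and `t ≠ j` since `x j = 0`. For binary `A` the inner product of
columns `j` and `t` counts their common rows, so each of the at most `k` columns `t` accounts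
for at most `r - 1` such rows.
-/

open Finset Matrix

namespace Matrix

variable {ι κ R : Type*}

theorem exists_ne_zero_of_mulVec_ne_zero [Fintype κ] [NonUnitalNonAssocSemiring R]
    {A : Matrix ι κ R} {x : κ → R} {i : ι} (h : (A *ᵥ x) i ≠ 0) : ∃ t, x t ≠ 0 ∧ A i t ≠ 0 := by
  obtain ⟨t, -, ht⟩ := Finset.exists_ne_zero_of_sum_ne_zero h
  exact ⟨t, right_ne_zero_of_mul ht, left_ne_zero_of_mul ht⟩

theorem card_filter_mulVec_ne_zero_le [Fintype ι] [Fintype κ] [DecidableEq ι]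
    [NonUnitalNonAssocSemiring R] [DecidableEq R] (A : Matrix ι κ R) (x : κ → R) (p : ι → Prop)
    [DecidablePred p] :
    #{i | p i ∧ (A *ᵥ x) i ≠ 0} ≤ ∑ t ∈ {t | x t ≠ 0}, #{i | p i ∧ A i t ≠ 0} := by
  refine (card_le_card fun i hi => ?_).trans card_biUnion_le
  simp only [mem_filter, mem_univ, true_and] at hi
  obtain ⟨t, hxt, hAit⟩ := exists_ne_zero_of_mulVec_ne_zero hi.2
  simp only [mem_biUnion, mem_filter, mem_univ, true_and]
  exact ⟨t, hxt, hi.1, hAit⟩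

theorem card_common_ones_eq_sum_mul [Fintype ι] [NonAssocSemiring R] [DecidableEq R]
    {A : Matrix ι κ R} (hbin : ∀ i t, A i t = 0 ∨ A i t = 1) (j t : κ) :
    (#{i | A i j = 1 ∧ A i t = 1} : R) = ∑ i, A i j * A i t := by
  rw [card_filter, Nat.cast_sum]
  refine sum_congr rfl fun i _ => ?_
  rcases hbin i j with h | h <;> rcases hbin i t with h' | h' <;>
    simp [h, h', eq_comm (a := (0 : R))]

end Matrix

theorem stmt0_general {m n r k : ℕ}
    (A : Matrix (Fin m) (Fin n) ℝ)
    (hbin : ∀ i j, A i j = 0 ∨ A i j = 1)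
    (hip : ∀ j t : Fin n, j ≠ t → ∑ i, A i j * A i t ≤ ((r - 1 : ℕ) : ℝ))
    (x : Fin n → ℝ)
    (hx : (Finset.univ.filter (fun i => x i ≠ 0)).card ≤ k)
    (y : Fin m → ℝ) (hy : y = A.mulVec x)
    (j : Fin n) (hj : x j = 0) :
    (Finset.univ.filter (fun i => A i j = 1 ∧ y i ≠ 0)).card ≤ k * (r - 1) := by
  subst hy
  have hcommon : ∀ t ∈ ({t | x t ≠ 0} : Finset _), #{i | A i j = 1 ∧ A i t ≠ 0} ≤ r - 1 := by
    intro t ht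
    have hjt : j ≠ t := by rintro rfl; simp [hj] at ht
    have hones : #{i | A i j = 1 ∧ A i t ≠ 0} = #{i | A i j = 1 ∧ A i t = 1} := by
      congr 1
      refine filter_congr fun i _ => and_congr_right fun _ => ?_
      rcases hbin i t with h | h <;> simp [h]
    rw [hones]
    exact_mod_cast (card_common_ones_eq_sum_mul hbin j t).trans_le (hip j t hjt)
  calc #{i | A i j = 1 ∧ (A *ᵥ x) i ≠ 0}
      ≤ ∑ t ∈ {t | x t ≠ 0}, #{i | A i j = 1 ∧ A i t ≠ 0} :=
        card_filter_mulVec_ne_zero_le A x _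
    _ ≤ #{t | x t ≠ 0} * (r - 1) := sum_le_card_nsmul _ _ _ hcommon
    _ ≤ k * (r - 1) := Nat.mul_le_mul_right _ hx

/-- If `x` is `k`-sparse and `A` is a binary matrix whose every column has
exactly `q` ones and any two distinct columns have inner product at most `r-1`, then for
`j` not in the support of `x`, the reduced measurement vector `ȳ_j` (entries of `y = Ax`
over the rows where column `j` has a `1`) has at most `k(r-1)` nonzero components. -/
theorem stmt0 {m n q r k : ℕ}
    (A : Matrix (Fin m) (Fin n) ℝ)
    (hbin : ∀ i j, A i j = 0 ∨ A i j = 1)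
    (hcol : ∀ j : Fin n, (Finset.univ.filter (fun i => A i j = 1)).card = q)
    (hip : ∀ j t : Fin n, j ≠ t → ∑ i, A i j * A i t ≤ ((r - 1 : ℕ) : ℝ))
    (x : Fin n → ℝ)
    (hx : (Finset.univ.filter (fun i => x i ≠ 0)).card ≤ k)
    (y : Fin m → ℝ) (hy : y = A.mulVec x)
    (j : Fin n) (hj : x j = 0) :
    (Finset.univ.filter (fun i => A i j = 1 ∧ y i ≠ 0)).card ≤ k * (r - 1) :=
  stmt0_general A hbin hip x hx y hy j hj
end

section
/- If x is a k-sparse vector in R^n and A is a binary matrix satisfying the main assumption (each column has exactly q ones, distinct columns have inner product at most r-1), then for any index j in the support of x, at least q - (k-1)(r-1) components of the reduced measurement vector ȳ_j are equal to x_j. -/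
open Finset

/-!
Call a row `i` of column `j` *bad* if `yᵢ ≠ x j`. Since `yᵢ = ∑ₜ A i t * x t` and `A i j = 1`,
a bad row must also meet some other column `t` in the support of `x`. There are at most `k - 1`
such columns, and each shares at most `r - 1` rows with column `j`, so at most `(k - 1)(r - 1)`
of the `q` rows of column `j` are bad.
-/

lemma sum_mul_eq_card_filter_of_binary {ι R : Type*} [Fintype ι] [NonAssocSemiring R]
    [DecidableEq R] {u v : ι → R} (hu : ∀ i, u i = 0 ∨ u i = 1)
    (hv : ∀ i, v i = 0 ∨ v i = 1) :
    ∑ i, u i * v i = (#{i | u i = 1 ∧ v i = 1} : R) := by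
  rw [natCast_card_filter]
  refine sum_congr rfl fun i _ => ?_
  rcases hu i with h | h <;> rcases hv i with h' | h' <;> simp [h, h']

lemma mulVec_apply_eq_mul_of_forall_ne {m n R : Type*} [Fintype n]
    [NonUnitalNonAssocSemiring R] (A : Matrix m n R) (x : n → R) (i : m) (j : n)
    (hA : ∀ t, t ≠ j → x t ≠ 0 → A i t = 0) :
    A.mulVec x i = A i j * x j := by
  refine sum_eq_single j (fun t _ htj => ?_) (by simp)
  by_cases hxt : x t = 0
  · simp [hxt]
  · simp [hA t htj hxt]

lemma card_filter_mulVec_ne_le {m n R : Type*} [Fintype m] [Fintype n] [DecidableEq m]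
    [DecidableEq n] [NonAssocSemiring R] [DecidableEq R]
    (A : Matrix m n R) (hbin : ∀ i t, A i t = 0 ∨ A i t = 1) (x : n → R) (j : n) :
    #{i | A i j = 1 ∧ A.mulVec x i ≠ x j} ≤
      ∑ t ∈ (univ.filter fun t => x t ≠ 0).erase j, #{i | A i j = 1 ∧ A i t = 1} := by
  refine (card_le_card fun i hi => ?_).trans card_biUnion_le
  obtain ⟨hij, hy⟩ := (mem_filter.mp hi).2
  by_contra hnot
  simp only [mem_biUnion, mem_erase, mem_filter, mem_univ, true_and, not_exists,
    not_and] at hnot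
  refine hy ?_
  rw [mulVec_apply_eq_mul_of_forall_ne A x i j, hij, one_mul]
  intro t htj hxt
  exact (hbin i t).resolve_right (hnot t ⟨htj, hxt⟩ hij)

/-- Under the main assumption, if `j` is in the support of the `k`-sparse
vector `x`, then at least `q - (k-1)(r-1)` components of the reduced measurement vector
`ȳ_j` are equal to `x j`. -/
theorem stmt1 {m n q r k : ℕ}
    (A : Matrix (Fin m) (Fin n) ℝ)
    (hbin : ∀ i j, A i j = 0 ∨ A i j = 1)
    (hcol : ∀ j : Fin n, (Finset.univ.filter (fun i => A i j = 1)).card = q)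
    (hip : ∀ j t : Fin n, j ≠ t → ∑ i, A i j * A i t ≤ ((r - 1 : ℕ) : ℝ))
    (x : Fin n → ℝ)
    (hx : (Finset.univ.filter (fun i => x i ≠ 0)).card ≤ k)
    (y : Fin m → ℝ) (hy : y = A.mulVec x)
    (j : Fin n) (hj : x j ≠ 0) :
    q - (k - 1) * (r - 1) ≤
      (Finset.univ.filter (fun i => A i j = 1 ∧ y i = x j)).card := by
  subst hy
  set T := (univ.filter fun t => x t ≠ 0).erase j
  have hoverlap : ∀ t ∈ T, #{i | A i j = 1 ∧ A i t = 1} ≤ r - 1 := by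
    intro t ht
    have h := hip j t (ne_of_mem_erase ht).symm
    rw [sum_mul_eq_card_filter_of_binary (hbin · j) (hbin · t)] at h
    exact_mod_cast h
  have hT : #T ≤ k - 1 := by
    rw [card_erase_of_mem (by simpa using hj)]
    omega
  have hbad : #{i | A i j = 1 ∧ A.mulVec x i ≠ x j} ≤ (k - 1) * (r - 1) :=
    calc _ ≤ ∑ t ∈ T, #{i | A i j = 1 ∧ A i t = 1} := card_filter_mulVec_ne_le A hbin x j
      _ ≤ #T * (r - 1) := sum_le_card_nsmul _ _ _ hoverlap
      _ ≤ (k - 1) * (r - 1) := Nat.mul_le_mul_right _ hT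
  have hsplit :=
    card_filter_add_card_filter_not (s := {i | A i j = 1}) (fun i => A.mulVec x i = x j)
  simp only [filter_filter, ← ne_eq] at hsplit
  have := hcol j
  omega
end

section
/- Suppose A is binary satisfying the main assumption, x ∈ R^n is k-sparse, and y = Ax + η where η ∈ R^m has at most M nonzero components. Then: (1) if j ∉ supp(x), ȳ_j has at most k(r-1) + M nonzero components; (2) if j ∈ supp(x), at least q - (k-1)(r-1) - M components of ȳ_j equal x_j. -/
/-!
On a row `i` of column `j`, `y i = x j + ∑_{t ≠ j} A i t * x t + η i`. So `y i ≠ x j` forces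
either `η i ≠ 0` or row `i` to lie in some other column `t` of the support of `x`, and any two
distinct columns share at most `r - 1` rows. Hence column `j` has at most
`#(supp x \ {j}) * (r - 1) + M` rows where `y` differs from `x j`: this is (1) when `x j = 0`,
and (2) follows by counting the complement in the `q` rows of column `j` when `x j ≠ 0`.
-/

open Finset Matrix

theorem card_filter_eq_one_and_eq_one {ι : Type*} [Fintype ι] {u v : ι → ℝ}
    (hu : ∀ i, u i = 0 ∨ u i = 1) (hv : ∀ i, v i = 0 ∨ v i = 1) :
    (#{i | u i = 1 ∧ v i = 1} : ℝ) = ∑ i, u i * v i := by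
  rw [card_filter, Nat.cast_sum]
  refine sum_congr rfl fun i _ => ?_
  rcases hu i with h | h <;> rcases hv i with h' | h' <;> simp [h, h']

theorem Matrix.exists_ne_of_mulVec_apply_ne {ι κ R : Type*} [Fintype κ] [DecidableEq κ]
    [NonUnitalNonAssocSemiring R] {A : Matrix ι κ R} {x : κ → R} {i : ι} {j : κ}
    (h : (A *ᵥ x) i ≠ A i j * x j) : ∃ t ≠ j, A i t ≠ 0 ∧ x t ≠ 0 := by
  by_contra! hrest
  refine h (Fintype.sum_eq_single j fun t ht => ?_)
  change A i t * x t = 0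
  by_cases hAt : A i t = 0
  · rw [hAt, zero_mul]
  · rw [hrest t ht hAt, mul_zero]

section BinaryMeasurement

variable {ι κ : Type*} [Fintype ι] {A : Matrix ι κ ℝ}

theorem card_filter_column_and_column_le {c : ℕ} (hbin : ∀ i j, A i j = 0 ∨ A i j = 1)
    (hip : ∀ j t, j ≠ t → ∑ i, A i j * A i t ≤ (c : ℝ)) {j t : κ} (hjt : j ≠ t) :
    #{i | A i j = 1 ∧ A i t = 1} ≤ c := by
  have h := hip j t hjt
  rw [← card_filter_eq_one_and_eq_one (hbin · j) (hbin · t)] at h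
  exact_mod_cast h

variable [DecidableEq ι] [Fintype κ] [DecidableEq κ] {x : κ → ℝ} {η y : ι → ℝ}

theorem filter_column_ne_subset (hbin : ∀ i j, A i j = 0 ∨ A i j = 1)
    (hy : y = A *ᵥ x + η) (j : κ) :
    ({i | A i j = 1 ∧ y i ≠ x j} : Finset ι) ⊆
      ((({t | x t ≠ 0} : Finset κ).erase j).biUnion fun t => {i | A i j = 1 ∧ A i t = 1}) ∪
        ({i | η i ≠ 0} : Finset ι) := by
  intro i hi
  simp only [mem_filter, mem_univ, true_and] at hi
  obtain ⟨hAij, hyne⟩ := hi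
  simp only [mem_union, mem_biUnion, mem_erase, mem_filter, mem_univ, true_and]
  by_cases hηi : η i = 0
  · have hmul : (A *ᵥ x) i ≠ A i j * x j := by
      simpa [hy, hηi, hAij] using hyne
    obtain ⟨t, htj, hAit, hxt⟩ := Matrix.exists_ne_of_mulVec_apply_ne hmul
    exact Or.inl ⟨t, ⟨htj, hxt⟩, hAij, (hbin i t).resolve_left hAit⟩
  · exact Or.inr hηi

theorem card_filter_column_ne_le {c : ℕ} (hbin : ∀ i j, A i j = 0 ∨ A i j = 1)
    (hip : ∀ j t, j ≠ t → ∑ i, A i j * A i t ≤ (c : ℝ)) (hy : y = A *ᵥ x + η) (j : κ) :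
    #{i | A i j = 1 ∧ y i ≠ x j} ≤ #(({t | x t ≠ 0} : Finset κ).erase j) * c + #{i | η i ≠ 0} :=
  calc #{i | A i j = 1 ∧ y i ≠ x j}
      ≤ #((({t | x t ≠ 0} : Finset κ).erase j).biUnion
          fun t => {i | A i j = 1 ∧ A i t = 1}) + #{i | η i ≠ 0} :=
        (card_le_card (filter_column_ne_subset hbin hy j)).trans (card_union_le _ _)
    _ ≤ #(({t | x t ≠ 0} : Finset κ).erase j) * c + #{i | η i ≠ 0} := by
        gcongr
        refine card_biUnion_le_card_mul _ _ _ fun t ht => ?_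
        exact card_filter_column_and_column_le hbin hip (ne_of_mem_erase ht).symm

end BinaryMeasurement

/-- With the main assumption, `x` `k`-sparse and `y = Ax + η` where `η` has
at most `M` nonzero components: (1) if `j ∉ supp(x)`, then `ȳ_j` has at most
`k(r-1) + M` nonzero components; (2) if `j ∈ supp(x)`, then at least
`q - (k-1)(r-1) - M` components of `ȳ_j` equal `x j`. -/
theorem stmt3 {m n q r k M : ℕ}
    (A : Matrix (Fin m) (Fin n) ℝ)
    (hbin : ∀ i j, A i j = 0 ∨ A i j = 1)
    (hcol : ∀ j : Fin n, (Finset.univ.filter (fun i => A i j = 1)).card = q)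
    (hip : ∀ j t : Fin n, j ≠ t → ∑ i, A i j * A i t ≤ ((r - 1 : ℕ) : ℝ))
    (x : Fin n → ℝ)
    (hx : (Finset.univ.filter (fun i => x i ≠ 0)).card ≤ k)
    (η : Fin m → ℝ)
    (hη : (Finset.univ.filter (fun i => η i ≠ 0)).card ≤ M)
    (y : Fin m → ℝ) (hy : y = A.mulVec x + η) :
    (∀ j : Fin n, x j = 0 →
      (Finset.univ.filter (fun i => A i j = 1 ∧ y i ≠ 0)).card ≤ k * (r - 1) + M)
    ∧
    (∀ j : Fin n, x j ≠ 0 →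
      q - ((k - 1) * (r - 1) + M) ≤
        (Finset.univ.filter (fun i => A i j = 1 ∧ y i = x j)).card) := by
  have hmismatch := card_filter_column_ne_le hbin hip hy
  refine ⟨fun j hj => ?_, fun j hj => ?_⟩
  · have hsupp : #(({t | x t ≠ 0} : Finset (Fin n)).erase j) ≤ k := card_erase_le.trans hx
    simpa only [hj] using
      (hmismatch j).trans (add_le_add (Nat.mul_le_mul_right (r - 1) hsupp) hη)
  · have hsupp : #(({t | x t ≠ 0} : Finset (Fin n)).erase j) ≤ k - 1 := by
      rw [card_erase_of_mem (by simpa using hj)]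
      omega
    have hsplit := card_filter_add_card_filter_not (s := {i | A i j = 1})
      (fun i => y i = x j)
    simp only [filter_filter, hcol, ← ne_eq] at hsplit
    have := (hmismatch j).trans (add_le_add (Nat.mul_le_mul_right (r - 1) hsupp) hη)
    omega
end

section
/- Suppose A is binary satisfying the main assumption with q > 2[k(r-1) + M], x ∈ R^n is k-sparse, and y = Ax + η with ‖η‖_0 ≤ M. Then for each j, j ∈ supp(x) if and only if more than q/2 components of ȳ_j are nonzero, and if j ∈ supp(x), the unique value attained by more than q/2 components of ȳ_j is x_j; hence the majority-decoding algorithm recovers x exactly despite arbitrary-magnitude corruption of up to M measurements. -/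
/-!
Fix a column `j` and a row `i` with `A i j = 1`. Then `y i = x j` unless `η i ≠ 0` or some other
column `t` in the support of `x` also has `A i t = 1`; by the inner-product bound each such `t`
accounts for at most `r - 1` rows. So at most `k (r - 1) + M < q / 2` of the `q` entries of `ȳ_j`
differ from `x j`, i.e. `x j` is the strict majority value of `ȳ_j`, and every claim is read off
from that.
-/

open Finset

section Majority

variable {ι α : Type*} [DecidableEq α] {s : Finset ι} {f : ι → α} {c : α}

theorem lt_two_mul_card_filter_eq_of_two_mul_card_filter_ne_lt
    (h : 2 * #{i ∈ s | f i ≠ c} < #s) : #s < 2 * #{i ∈ s | f i = c} := by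
  have := s.card_filter_add_card_filter_not (f · = c)
  simp only [ne_eq] at h
  omega

theorem eq_of_lt_two_mul_card_filter_eq {d : α}
    (hc : #s < 2 * #{i ∈ s | f i = c}) (hd : #s < 2 * #{i ∈ s | f i = d}) : d = c := by
  classical
  obtain ⟨i, hi⟩ := inter_nonempty_of_card_lt_card_add_card (filter_subset _ s)
    (filter_subset _ s) (by omega : #s < #{i ∈ s | f i = d} + #{i ∈ s | f i = c})
  simp only [mem_inter, mem_filter] at hi
  exact hi.1.2.symm.trans hi.2.2

theorem ne_zero_iff_lt_two_mul_card_filter_ne_zero [Zero α]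
    (h : 2 * #{i ∈ s | f i ≠ c} < #s) : c ≠ 0 ↔ #s < 2 * #{i ∈ s | f i ≠ 0} := by
  refine ⟨fun hc => ?_, ?_⟩
  · calc #s < 2 * #{i ∈ s | f i = c} := lt_two_mul_card_filter_eq_of_two_mul_card_filter_ne_lt h
      _ ≤ 2 * #{i ∈ s | f i ≠ 0} := by
        gcongr
        exact fun hi => hi ▸ hc
  · rintro hlt rfl
    omega

end Majority

theorem sum_mul_eq_card_filter {ι R : Type*} [Fintype ι] [Semiring R] [DecidableEq R]
    {f g : ι → R} (hf : ∀ i, f i = 0 ∨ f i = 1) (hg : ∀ i, g i = 0 ∨ g i = 1) :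
    ∑ i, f i * g i = #{i | f i = 1 ∧ g i = 1} := by
  rw [← sum_boole]
  refine sum_congr rfl fun i _ => ?_
  rcases hf i with h₁ | h₁ <;> rcases hg i with h₂ | h₂ <;> simp [h₁, h₂]

namespace Matrix

variable {m n R : Type*} [Fintype n]

theorem exists_ne_of_mulVec_apply_ne_s4 [Semiring R] {A : Matrix m n R} {x : n → R} {i : m} {j : n}
    (hij : A i j = 1) (h : (A *ᵥ x) i ≠ x j) : ∃ t ≠ j, A i t ≠ 0 ∧ x t ≠ 0 := by
  by_contra! H
  refine h ((Fintype.sum_eq_single j fun t ht => ?_).trans (by simp [hij]))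
  show A i t * x t = 0
  by_cases hA : A i t = 0
  · rw [hA, zero_mul]
  · rw [H t ht hA, mul_zero]

theorem card_filter_mulVec_add_ne_le [Fintype m] [DecidableEq m] [DecidableEq n] [Semiring R]
    [DecidableEq R] {A : Matrix m n R} (hA : ∀ i j, A i j = 0 ∨ A i j = 1) (x : n → R)
    (η : m → R) (j : n) :
    #{i | A i j = 1 ∧ (A *ᵥ x + η) i ≠ x j} ≤
      ∑ t ∈ ({t | x t ≠ 0} : Finset n).erase j, #{i | A i j = 1 ∧ A i t = 1} + #{i | η i ≠ 0} := by
  refine (card_le_card fun i hi => ?_).trans ((card_union_le _ _).trans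
    (Nat.add_le_add_right card_biUnion_le _))
  obtain ⟨hij, hyi⟩ := (mem_filter.1 hi).2
  by_cases hη : η i = 0
  · rw [Pi.add_apply, hη, add_zero] at hyi
    obtain ⟨t, htj, hAt, hxt⟩ := exists_ne_of_mulVec_apply_ne_s4 hij hyi
    exact mem_union_left _ <| mem_biUnion.2
      ⟨t, mem_erase.2 ⟨htj, by simpa using hxt⟩, by simpa [hij] using (hA i t).resolve_left hAt⟩
  · exact mem_union_right _ (by simpa using hη)

end Matrix

/-- Under the main assumption with `q > 2(k(r-1)+M)`, with `y = Ax + η`,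
`‖η‖₀ ≤ M`: for each `j`, `j ∈ supp(x)` iff more than `q/2` components of `ȳ_j` are
nonzero; when `j ∈ supp(x)`, the unique value attained by more than `q/2` components of
`ȳ_j` is `x j`.  Hence majority decoding recovers `x` exactly despite corruption of up
to `M` measurements of arbitrary magnitude. -/
theorem stmt4 {m n q r k M : ℕ}
    (A : Matrix (Fin m) (Fin n) ℝ)
    (hbin : ∀ i j, A i j = 0 ∨ A i j = 1)
    (hcol : ∀ j : Fin n, (Finset.univ.filter (fun i => A i j = 1)).card = q)
    (hip : ∀ j t : Fin n, j ≠ t → ∑ i, A i j * A i t ≤ ((r - 1 : ℕ) : ℝ))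
    (hq : 2 * (k * (r - 1) + M) < q)
    (x : Fin n → ℝ)
    (hx : (Finset.univ.filter (fun i => x i ≠ 0)).card ≤ k)
    (η : Fin m → ℝ)
    (hη : (Finset.univ.filter (fun i => η i ≠ 0)).card ≤ M)
    (y : Fin m → ℝ) (hy : y = A.mulVec x + η) :
    (∀ j : Fin n,
      (x j ≠ 0 ↔ q < 2 * (Finset.univ.filter (fun i => A i j = 1 ∧ y i ≠ 0)).card) ∧
      (x j ≠ 0 →
        q < 2 * (Finset.univ.filter (fun i => A i j = 1 ∧ y i = x j)).card ∧
        (∀ c : ℝ, q < 2 * (Finset.univ.filter (fun i => A i j = 1 ∧ y i = c)).card →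
          c = x j)))
    ∧
    (∀ xhat : Fin n → ℝ,
      (∀ j : Fin n,
        (q < 2 * (Finset.univ.filter (fun i => A i j = 1 ∧ y i ≠ 0)).card →
          q < 2 * (Finset.univ.filter (fun i => A i j = 1 ∧ y i = xhat j)).card) ∧
        (¬ q < 2 * (Finset.univ.filter (fun i => A i j = 1 ∧ y i ≠ 0)).card →
          xhat j = 0)) →
      xhat = x) := by
  have hoverlap (j t : Fin n) (htj : t ≠ j) : #{i | A i j = 1 ∧ A i t = 1} ≤ r - 1 := by
    exact_mod_cast sum_mul_eq_card_filter (hbin · j) (hbin · t) ▸ hip j t htj.symm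
  have hminority (j : Fin n) : 2 * #{i ∈ {i | A i j = 1} | y i ≠ x j} < #{i | A i j = 1} := by
    rw [filter_filter, hcol, hy]
    refine lt_of_le_of_lt (Nat.mul_le_mul_left 2 ?_) hq
    refine (Matrix.card_filter_mulVec_add_ne_le hbin x η j).trans (add_le_add ?_ hη)
    refine (sum_le_card_nsmul _ _ _ fun t ht => hoverlap j t (ne_of_mem_erase ht)).trans ?_
    exact Nat.mul_le_mul_right _ (card_erase_le.trans hx)
  have hsupp (j : Fin n) := ne_zero_iff_lt_two_mul_card_filter_ne_zero (hminority j)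
  have hmajority (j : Fin n) := lt_two_mul_card_filter_eq_of_two_mul_card_filter_ne_lt (hminority j)
  have hunique (j : Fin n) {c d : ℝ} (hc : q < 2 * #{i | A i j = 1 ∧ y i = c})
      (hd : q < 2 * #{i | A i j = 1 ∧ y i = d}) : d = c :=
    eq_of_lt_two_mul_card_filter_eq (s := {i | A i j = 1}) (f := y)
      (by rwa [filter_filter, hcol]) (by rwa [filter_filter, hcol])
  simp only [filter_filter, hcol] at hsupp hmajority
  refine ⟨fun j => ⟨hsupp j, fun _ => ⟨hmajority j, fun c hc => hunique j (hmajority j) hc⟩⟩,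
    fun xhat hxhat => funext fun j => ?_⟩
  by_cases hxj : x j = 0
  · rw [(hxhat j).2 (by rwa [← hsupp j, not_not]), hxj]
  · exact hunique j (hmajority j) ((hxhat j).1 ((hsupp j).1 hxj))
end

section
/- Suppose A satisfies the main assumption with q > 2k(r-1), and x = x_d + x_r where x_d is k-sparse and ‖x_r‖_1 ≤ δ. Let u = A x_d and y = Ax. Then for j ∉ supp(x_d), at most k(r-1) components of ȳ_j have magnitude greater than δ, and for j ∈ supp(x_d), at least q - (k-1)(r-1) components of ȳ_j lie in the interval [(x_d)_j - δ, (x_d)_j + δ]. -/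
/-!
Write `y = A x_d + A x_r`. Since `A` is a 0/1 matrix, every entry of `A x_r` has magnitude at
most `‖x_r‖₁ ≤ δ`. A row through column `j` picks up a contribution of `x_d` from another
column `t` only if it also meets column `t`, and two distinct columns share at most `r - 1`
rows. With at most `k` (for `j ∉ supp x_d`) or `k - 1` (for `j ∈ supp x_d`) such columns `t`,
all but `k (r - 1)`, resp. `(k - 1) (r - 1)`, rows `i` of column `j` have `(A x_d)_i = (x_d)_j`,
so that `|y_i - (x_d)_j| ≤ δ` there.
-/

open Finset

namespace Matrix

variable {R ι κ : Type*}

def IsBinary [Zero R] [One R] (A : Matrix ι κ R) : Prop := ∀ i j, A i j = 0 ∨ A i j = 1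

namespace IsBinary

variable [CommRing R] {A : Matrix ι κ R} {v w : κ → R} {i : ι} {j : κ}

theorem exists_eq_one_of_mulVec_apply_ne_zero [Fintype κ] (hA : A.IsBinary)
    (h : (A *ᵥ v) i ≠ 0) : ∃ t, v t ≠ 0 ∧ A i t = 1 := by
  obtain ⟨t, -, ht⟩ := exists_ne_zero_of_sum_ne_zero h
  exact ⟨t, right_ne_zero_of_mul ht, (hA i t).resolve_left (left_ne_zero_of_mul ht)⟩

theorem mulVec_apply_eq [Fintype κ] (hA : A.IsBinary) (hij : A i j = 1)
    (h : ∀ t ≠ j, v t ≠ 0 → A i t ≠ 1) : (A *ᵥ v) i = v j := by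
  show ∑ t, A i t * v t = v j
  rw [sum_eq_single j, hij, one_mul]
  · intro t _ htj
    by_cases hv : v t = 0
    · simp [hv]
    · simp [(hA i t).resolve_right (h t htj hv)]
  · simp

variable [LinearOrder R] [IsStrictOrderedRing R]

theorem abs_mulVec_apply_le [Fintype κ] (hA : A.IsBinary) (v : κ → R) (i : ι) :
    |(A *ᵥ v) i| ≤ ∑ t, |v t| :=
  calc |(A *ᵥ v) i| = |∑ t, A i t * v t| := rfl
    _ ≤ ∑ t, |A i t * v t| := abs_sum_le_sum_abs _ _
    _ ≤ ∑ t, |v t| := sum_le_sum fun t _ => by rcases hA i t with h | h <;> simp [h]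

theorem card_filter_and_eq_one [Fintype ι] (hA : A.IsBinary) (j t : κ) :
    ((#{i | A i j = 1 ∧ A i t = 1} : ℕ) : R) = ∑ i, A i j * A i t := by
  rw [card_filter]
  push_cast
  refine sum_congr rfl fun i _ => ?_
  rcases hA i j with h | h <;> rcases hA i t with h' | h' <;> simp [h, h']

theorem card_biUnion_filter_and_eq_one_le [Fintype ι] [DecidableEq ι] (hA : A.IsBinary) {c : ℕ}
    {T : Finset κ} (hc : ∀ t ∈ T, ∑ i, A i j * A i t ≤ c) :
    #(T.biUnion fun t => {i | A i j = 1 ∧ A i t = 1}) ≤ #T * c :=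
  calc _ ≤ ∑ t ∈ T, #{i | A i j = 1 ∧ A i t = 1} := card_biUnion_le
    _ ≤ ∑ _t ∈ T, c := sum_le_sum fun t ht => by
        exact_mod_cast (hA.card_filter_and_eq_one j t).trans_le (hc t ht)
    _ = #T * c := by rw [sum_const, smul_eq_mul]

theorem card_filter_lt_abs_mulVec_apply_le [Fintype ι] [Fintype κ] [DecidableEq ι]
    {δ : R} {c k : ℕ} (hA : A.IsBinary)
    (hc : ∀ t ≠ j, ∑ i, A i j * A i t ≤ c) (hv : #{t | v t ≠ 0} ≤ k)
    (hw : ∑ t, |w t| ≤ δ) (hj : v j = 0) :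
    #{i | A i j = 1 ∧ δ < |(A *ᵥ (v + w)) i|} ≤ k * c := by
  have hsub : ({i | A i j = 1 ∧ δ < |(A *ᵥ (v + w)) i|} : Finset ι) ⊆
      ({t | v t ≠ 0} : Finset κ).biUnion fun t => {i | A i j = 1 ∧ A i t = 1} := by
    intro i hi
    simp only [mem_filter, mem_univ, true_and] at hi
    have hvi : (A *ᵥ v) i ≠ 0 := by
      intro h0
      have := hA.abs_mulVec_apply_le w i
      rw [mulVec_add, Pi.add_apply, h0, zero_add] at hi
      linarith [hi.2]
    obtain ⟨t, hvt, hit⟩ := hA.exists_eq_one_of_mulVec_apply_ne_zero hvi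
    simpa [hvt] using ⟨t, hvt, hi.1, hit⟩
  calc _ ≤ _ := card_le_card hsub
    _ ≤ #{t | v t ≠ 0} * c :=
        hA.card_biUnion_filter_and_eq_one_le fun t ht =>
          hc t fun htj => (mem_filter.1 ht).2 (htj ▸ hj)
    _ ≤ k * c := Nat.mul_le_mul_right _ hv

theorem card_filter_sub_le_card_filter_mulVec_apply_mem_Icc [Fintype ι] [Fintype κ]
    [DecidableEq ι] [DecidableEq κ] {δ : R} {c k : ℕ} (hA : A.IsBinary)
    (hc : ∀ t ≠ j, ∑ i, A i j * A i t ≤ c) (hv : #{t | v t ≠ 0} ≤ k)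
    (hw : ∑ t, |w t| ≤ δ) (hj : v j ≠ 0) :
    #{i | A i j = 1} - (k - 1) * c ≤
      #{i | A i j = 1 ∧ v j - δ ≤ (A *ᵥ (v + w)) i ∧ (A *ᵥ (v + w)) i ≤ v j + δ} := by
  set T : Finset κ := ({t | v t ≠ 0} : Finset κ).erase j
  have hsub : ({i | A i j = 1} : Finset ι) ⊆
      ({i | A i j = 1 ∧ v j - δ ≤ (A *ᵥ (v + w)) i ∧ (A *ᵥ (v + w)) i ≤ v j + δ} :
        Finset ι) ∪ T.biUnion fun t => {i | A i j = 1 ∧ A i t = 1} := by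
    intro i hi
    simp only [mem_filter, mem_univ, true_and] at hi
    by_cases hT : ∃ t ∈ T, A i t = 1
    · obtain ⟨t, ht, hit⟩ := hT
      exact mem_union_right _ (mem_biUnion.2 ⟨t, ht, by simp [hi, hit]⟩)
    · push Not at hT
      have hvi : (A *ᵥ v) i = v j := hA.mulVec_apply_eq hi fun t htj hvt =>
        hT t (by simp [T, htj, hvt])
      have hwi := abs_le.1 ((hA.abs_mulVec_apply_le w i).trans hw)
      have hyi : (A *ᵥ (v + w)) i = v j + (A *ᵥ w) i := by rw [mulVec_add, Pi.add_apply, hvi]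
      exact mem_union_left _ <| mem_filter.2
        ⟨mem_univ i, hi, by rw [hyi]; linarith, by rw [hyi]; linarith⟩
  have hT : #T ≤ k - 1 := by
    rw [card_erase_of_mem (by simpa using hj)]
    exact Nat.sub_le_sub_right hv 1
  have hbad : #(T.biUnion fun t => {i | A i j = 1 ∧ A i t = 1}) ≤ (k - 1) * c :=
    (hA.card_biUnion_filter_and_eq_one_le fun t ht => hc t (ne_of_mem_erase ht)).trans
      (Nat.mul_le_mul_right _ hT)
  have := (card_le_card hsub).trans (card_union_le _ _)
  omega

end IsBinary

end Matrix

theorem stmt6_general {m n q r k : ℕ}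
    (A : Matrix (Fin m) (Fin n) ℝ)
    (hbin : ∀ i j, A i j = 0 ∨ A i j = 1)
    (hcol : ∀ j : Fin n, (Finset.univ.filter (fun i => A i j = 1)).card = q)
    (hip : ∀ j t : Fin n, j ≠ t → ∑ i, A i j * A i t ≤ ((r - 1 : ℕ) : ℝ))
    (δ : ℝ)
    (x xd xr : Fin n → ℝ) (hsplit : x = xd + xr)
    (hxd : (Finset.univ.filter (fun i => xd i ≠ 0)).card ≤ k)
    (hxr : ∑ i, |xr i| ≤ δ)
    (y : Fin m → ℝ) (hy : y = A.mulVec x) :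
    (∀ j : Fin n, xd j = 0 →
      (Finset.univ.filter (fun i => A i j = 1 ∧ δ < |y i|)).card ≤ k * (r - 1))
    ∧
    (∀ j : Fin n, xd j ≠ 0 →
      q - (k - 1) * (r - 1) ≤
        (Finset.univ.filter
          (fun i => A i j = 1 ∧ xd j - δ ≤ y i ∧ y i ≤ xd j + δ)).card) := by
  subst hy hsplit
  have hA : A.IsBinary := hbin
  refine ⟨fun j hj => ?_, fun j hj => ?_⟩
  · exact hA.card_filter_lt_abs_mulVec_apply_le (fun t htj => hip j t htj.symm) hxd hxr hj
  · rw [← hcol j]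
    exact hA.card_filter_sub_le_card_filter_mulVec_apply_mem_Icc
      (fun t htj => hip j t htj.symm) hxd hxr hj

/-- Under the main assumption with `q > 2k(r-1)`, if `x = x_d + x_r` with
`x_d` `k`-sparse and `‖x_r‖₁ ≤ δ`, and `y = Ax`, then: for `j ∉ supp(x_d)` at most
`k(r-1)` components of `ȳ_j` have magnitude greater than `δ`, and for `j ∈ supp(x_d)`
at least `q - (k-1)(r-1)` components of `ȳ_j` lie in `[(x_d)_j - δ, (x_d)_j + δ]`. -/
theorem stmt6 {m n q r k : ℕ}
    (A : Matrix (Fin m) (Fin n) ℝ)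
    (hbin : ∀ i j, A i j = 0 ∨ A i j = 1)
    (hcol : ∀ j : Fin n, (Finset.univ.filter (fun i => A i j = 1)).card = q)
    (hip : ∀ j t : Fin n, j ≠ t → ∑ i, A i j * A i t ≤ ((r - 1 : ℕ) : ℝ))
    (hq : 2 * k * (r - 1) < q)
    (δ : ℝ)
    (x xd xr : Fin n → ℝ) (hsplit : x = xd + xr)
    (hxd : (Finset.univ.filter (fun i => xd i ≠ 0)).card ≤ k)
    (hxr : ∑ i, |xr i| ≤ δ)
    (y : Fin m → ℝ) (hy : y = A.mulVec x) :
    (∀ j : Fin n, xd j = 0 →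
      (Finset.univ.filter (fun i => A i j = 1 ∧ δ < |y i|)).card ≤ k * (r - 1))
    ∧
    (∀ j : Fin n, xd j ≠ 0 →
      q - (k - 1) * (r - 1) ≤
        (Finset.univ.filter
          (fun i => A i j = 1 ∧ xd j - δ ≤ y i ∧ y i ≤ xd j + δ)).card) :=
  stmt6_general A hbin hcol hip δ x xd xr hsplit hxd hxr y hy
end

section
/- Let A ∈ {0,1}^{m×n} with each column having exactly q ones and any two distinct columns having inner product at most r-1. Then for any set S of columns with |S| = s, the s×s Gram matrix G = A_S^T A_S has diagonal entries equal to q and off-diagonal entries bounded by r-1; hence by Gershgorin's theorem every eigenvalue of G lies in [q - (s-1)(r-1), q + (s-1)(r-1)]. Consequently the column-normalized matrix A' = (1/√q)A satisfies the restricted isometry property of order k with constant δ_k ≤ (k-1)(r-1)/q: that is, (1 - δ_k)‖u‖² ≤ ‖A'u‖² ≤ (1 + δ_k)‖u‖² for all k-sparse u. -/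
/-!
The Gram matrix `Aᵀ A` has diagonal `q` (a 0/1 column satisfies `∑ aᵢ² = #{i | aᵢ = 1}`) and
nonnegative off-diagonal entries at most `r - 1`, so Gershgorin places every eigenvalue of a
principal `s × s` block within `(s - 1)(r - 1)` of `q`. For the RIP, `‖Au‖² = uᵀ (Aᵀ A) u`
differs from `q ‖u‖²` by the off-diagonal part, which is at most
`(r - 1) ∑_{j ≠ l} |u_j| |u_l| = (r - 1) ((∑ |u_j|)² - ‖u‖²) ≤ (r - 1)(k - 1) ‖u‖²`
by Cauchy–Schwarz on the support of `u`.
-/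

open Finset

section SparseVector

variable {ι : Type*} [Fintype ι]

theorem sq_sum_abs_le_card_support_mul_sum_sq (u : ι → ℝ) :
    (∑ j, |u j|) ^ 2 ≤ #{j | u j ≠ 0} * ∑ j, u j ^ 2 := by
  have hsupp : ∀ f : ι → ℝ, (∀ j, u j = 0 → f j = 0) → ∑ j ∈ {j | u j ≠ 0}, f j = ∑ j, f j :=
    fun f hf => sum_subset (subset_univ _) fun j _ hj => hf j (by simpa using hj)
  rw [← hsupp _ fun j hj => by simp [hj], ← hsupp (fun j => u j ^ 2) fun j hj => by simp [hj]]
  simpa only [sq_abs] using sq_sum_le_card_mul_sum_sq (s := {j | u j ≠ 0}) (f := fun j => |u j|)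

theorem sum_sum_erase_abs_mul_abs_le [DecidableEq ι] {k : ℕ} (u : ι → ℝ)
    (hu : #{j | u j ≠ 0} ≤ k) :
    ∑ j, ∑ l ∈ univ.erase j, |u j| * |u l| ≤ ((k - 1 : ℕ) : ℝ) * ∑ j, u j ^ 2 := by
  have hoff : ∑ j, ∑ l ∈ univ.erase j, |u j| * |u l| = (∑ j, |u j|) ^ 2 - ∑ j, u j ^ 2 := by
    simp only [← mul_sum, sum_erase_eq_sub (mem_univ _), abs_mul_abs_self, sum_sub_distrib,
      ← sum_mul, sq]
  have hcs : (∑ j, |u j|) ^ 2 ≤ k * ∑ j, u j ^ 2 :=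
    (sq_sum_abs_le_card_support_mul_sum_sq u).trans <|
      mul_le_mul_of_nonneg_right (mod_cast hu) (sum_nonneg fun j _ => sq_nonneg _)
  have hk : (k : ℝ) - 1 ≤ ((k - 1 : ℕ) : ℝ) := by
    rcases k with _ | k <;> simp
  rw [hoff]
  nlinarith [sum_nonneg fun j (_ : j ∈ univ) => sq_nonneg (u j)]

end SparseVector

theorem sum_mul_self_eq_card_eq_one_of_zero_or_one {ι : Type*} [Fintype ι] (f : ι → ℝ)
    (hf : ∀ i, f i = 0 ∨ f i = 1) : ∑ i, f i * f i = #{i | f i = 1} := by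
  rw [← sum_boole]
  refine sum_congr rfl fun i _ => ?_
  rcases hf i with h | h <;> simp [h]

theorem le_div_and_div_le_of_abs_sub_mul_le {Q X K q : ℝ} (hq : 0 < q)
    (h : |Q - q * X| ≤ K * X) : (1 - K / q) * X ≤ Q / q ∧ Q / q ≤ (1 + K / q) * X := by
  rw [abs_le] at h
  constructor
  · rw [le_div_iff₀ hq]
    field_simp
    linarith [h.1]
  · rw [div_le_iff₀ hq]
    field_simp
    linarith [h.2]

namespace Matrix

section Gram

variable {m n : Type*} [Fintype m]

theorem transpose_mul_self_apply (A : Matrix m n ℝ) (j l : n) :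
    (Aᵀ * A) j l = ∑ i, A i j * A i l := by
  simp only [mul_apply, transpose_apply]

theorem transpose_mul_self_apply_nonneg {A : Matrix m n ℝ} (hA : ∀ i j, 0 ≤ A i j) (j l : n) :
    0 ≤ (Aᵀ * A) j l := by
  rw [transpose_mul_self_apply]
  exact sum_nonneg fun i _ => mul_nonneg (hA i j) (hA i l)

theorem sum_one_div_sqrt_mul_mulVec_sq [Fintype n] (A : Matrix m n ℝ) (u : n → ℝ) {q : ℝ}
    (hq : 0 ≤ q) :
    ∑ i, (1 / √q * (A *ᵥ u) i) ^ 2 = u ⬝ᵥ (Aᵀ * A) *ᵥ u / q := by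
  rw [← mulVec_mulVec, dotProduct_mulVec, vecMul_transpose, dotProduct, sum_div]
  refine sum_congr rfl fun i _ => ?_
  rw [mul_pow, div_pow, one_pow, Real.sq_sqrt hq]
  ring

end Gram

section UniformOffDiagonal

variable {ι : Type*} [Fintype ι] [DecidableEq ι] {M : Matrix ι ι ℝ} {d c : ℝ}

theorem abs_sub_le_of_hasEigenvalue_of_offDiag_le (hdiag : ∀ j, M j j = d)
    (hoff : ∀ j l, j ≠ l → |M j l| ≤ c) {μ : ℝ} (hμ : Module.End.HasEigenvalue (toLin' M) μ) :
    |μ - d| ≤ ((Fintype.card ι - 1 : ℕ) : ℝ) * c := by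
  obtain ⟨j, hj⟩ := eigenvalue_mem_ball hμ
  rw [Metric.mem_closedBall, Real.dist_eq, hdiag] at hj
  refine hj.trans ?_
  calc ∑ l ∈ univ.erase j, ‖M j l‖ ≤ #(univ.erase j) • c :=
        sum_le_card_nsmul _ _ _ fun l hl => hoff j l (ne_of_mem_erase hl).symm
    _ = ((Fintype.card ι - 1 : ℕ) : ℝ) * c := by
        rw [card_erase_of_mem (mem_univ j), card_univ, nsmul_eq_mul]

theorem abs_dotProduct_mulVec_sub_le_of_offDiag_le (hdiag : ∀ j, M j j = d)
    (hoff : ∀ j l, j ≠ l → |M j l| ≤ c) (hc : 0 ≤ c) {k : ℕ} (u : ι → ℝ)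
    (hu : #{j | u j ≠ 0} ≤ k) :
    |u ⬝ᵥ M *ᵥ u - d * ∑ j, u j ^ 2| ≤ ((k - 1 : ℕ) : ℝ) * c * ∑ j, u j ^ 2 := by
  have hsplit : u ⬝ᵥ M *ᵥ u - d * ∑ j, u j ^ 2 = ∑ j, ∑ l ∈ univ.erase j, u j * M j l * u l := by
    have hrow : ∀ j, u j * (M *ᵥ u) j = d * u j ^ 2 + ∑ l ∈ univ.erase j, u j * M j l * u l := by
      intro j
      rw [mulVec, dotProduct, ← add_sum_erase _ _ (mem_univ j), hdiag, mul_add, mul_sum]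
      simp only [mul_assoc]
      ring
    simp only [dotProduct, hrow, sum_add_distrib, mul_sum, add_sub_cancel_left]
  calc |u ⬝ᵥ M *ᵥ u - d * ∑ j, u j ^ 2|
      ≤ ∑ j, ∑ l ∈ univ.erase j, |u j| * |u l| * c := by
        rw [hsplit]
        refine (abs_sum_le_sum_abs _ _).trans (sum_le_sum fun j _ => ?_)
        refine (abs_sum_le_sum_abs _ _).trans (sum_le_sum fun l hl => ?_)
        rw [abs_mul, abs_mul, mul_right_comm]
        exact mul_le_mul_of_nonneg_left (hoff j l (ne_of_mem_erase hl).symm) (by positivity)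
    _ = (∑ j, ∑ l ∈ univ.erase j, |u j| * |u l|) * c := by simp only [sum_mul]
    _ ≤ (((k - 1 : ℕ) : ℝ) * ∑ j, u j ^ 2) * c :=
        mul_le_mul_of_nonneg_right (sum_sum_erase_abs_mul_abs_le u hu) hc
    _ = ((k - 1 : ℕ) : ℝ) * c * ∑ j, u j ^ 2 := by ring

end UniformOffDiagonal

end Matrix

open Matrix in
/-- Under the main assumption, for any set `S` of `s` columns, the Gram
matrix `G = A_S^T A_S` has diagonal entries `q` and off-diagonal entries `≤ r-1`;
every (real) eigenvalue of `G` lies in `[q - (s-1)(r-1), q + (s-1)(r-1)]`; and the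
column-normalized matrix `A' = (1/√q) A` satisfies the RIP of order `k` with constant
`δ_k ≤ (k-1)(r-1)/q`. -/
theorem stmt9 {m n q r k s : ℕ} (hq : 0 < q)
    (A : Matrix (Fin m) (Fin n) ℝ)
    (hbin : ∀ i j, A i j = 0 ∨ A i j = 1)
    (hcol : ∀ j : Fin n, (Finset.univ.filter (fun i => A i j = 1)).card = q)
    (hip : ∀ j t : Fin n, j ≠ t → ∑ i, A i j * A i t ≤ ((r - 1 : ℕ) : ℝ))
    (S : Finset (Fin n)) (hS : S.card = s)
    (G : Matrix S S ℝ) (hG : ∀ a b : S, G a b = ∑ i, A i a.1 * A i b.1) :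
    (∀ a : S, G a a = (q : ℝ)) ∧
    (∀ a b : S, a ≠ b → G a b ≤ ((r - 1 : ℕ) : ℝ)) ∧
    (∀ μ : ℝ, (∃ v : S → ℝ, v ≠ 0 ∧ G.mulVec v = μ • v) →
      (q : ℝ) - (((s - 1) * (r - 1) : ℕ) : ℝ) ≤ μ ∧
      μ ≤ (q : ℝ) + (((s - 1) * (r - 1) : ℕ) : ℝ)) ∧
    (∀ u : Fin n → ℝ, (Finset.univ.filter (fun i => u i ≠ 0)).card ≤ k →
      (1 - (((k - 1) * (r - 1) : ℕ) : ℝ) / q) * (∑ i, (u i) ^ 2) ≤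
        ∑ i, ((1 / Real.sqrt q) * A.mulVec u i) ^ 2 ∧
      ∑ i, ((1 / Real.sqrt q) * A.mulVec u i) ^ 2 ≤
        (1 + (((k - 1) * (r - 1) : ℕ) : ℝ) / q) * (∑ i, (u i) ^ 2)) := by
  have hMdiag : ∀ j, (Aᵀ * A) j j = q := fun j => by
    rw [transpose_mul_self_apply, sum_mul_self_eq_card_eq_one_of_zero_or_one _ fun i => hbin i j,
      hcol]
  have hMoff : ∀ j l, j ≠ l → |(Aᵀ * A) j l| ≤ ((r - 1 : ℕ) : ℝ) := fun j l hjl => by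
    have hA : ∀ i j, 0 ≤ A i j := fun i j => by rcases hbin i j with h | h <;> simp [h]
    rw [abs_of_nonneg (transpose_mul_self_apply_nonneg hA j l), transpose_mul_self_apply]
    exact hip j l hjl
  have hGM : ∀ a b, G a b = (Aᵀ * A) a b := fun a b => by rw [hG, transpose_mul_self_apply]
  have hGdiag : ∀ a, G a a = q := fun a => by rw [hGM, hMdiag]
  have hGoff : ∀ a b, a ≠ b → |G a b| ≤ ((r - 1 : ℕ) : ℝ) := fun a b hab => by
    rw [hGM]
    exact hMoff a b (Subtype.coe_injective.ne hab)
  refine ⟨hGdiag, fun a b hab => (le_abs_self _).trans (hGoff a b hab), ?_, ?_⟩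
  · rintro μ ⟨v, hv, hGv⟩
    have hμ := abs_sub_le_of_hasEigenvalue_of_offDiag_le hGdiag hGoff
      (Module.End.hasEigenvalue_of_hasEigenvector ⟨by simpa [toLin'_apply] using hGv, hv⟩)
    rw [Fintype.card_coe, hS, abs_le] at hμ
    push_cast
    constructor <;> linarith [hμ.1, hμ.2]
  · intro u hu
    rw [sum_one_div_sqrt_mul_mulVec_sq A u (Nat.cast_nonneg q)]
    have hQ := abs_dotProduct_mulVec_sub_le_of_offDiag_le hMdiag hMoff (Nat.cast_nonneg _) u hu
    push_cast at hQ ⊢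
    exact le_div_and_div_le_of_abs_sub_mul_le (Nat.cast_pos.mpr hq) hQ
end

section
/- Let A satisfy the main assumption and let S ⊆ [n] be a set of columns with |S| ≤ K. Then the neighborhood N(S) (the set of rows i for which some column j ∈ S has A_{ij} = 1) satisfies |N(S)| ≥ q|S| - (r-1)·|S|(|S|-1)/2 ≥ (1 - (K-1)(r-1)/(2q))·q|S|; hence the bipartite graph with bi-adjacency matrix A is a (K, 1-β)-expander with β = (K-1)(r-1)/(2q), provided β < 1. -/
/-!
Write `N j` for the set of rows in which column `j` has a one, so `|N j| = q`, `N(S)` is the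
union of the `N j` over `j ∈ S`, and for a 0/1 matrix the inner product of two columns is
`|N j ∩ N t| ≤ r - 1`. Adding the columns of `S` one at a time, each new `N j` loses at most
`(r - 1)` rows to each earlier one, which gives the Bonferroni-type bound
`|N(S)| ≥ q|S| - (r - 1)·|S|(|S| - 1)/2`; the second bound follows from `|S| - 1 ≤ K - 1`.
-/

open Finset

namespace Finset

variable {α ι : Type*} [DecidableEq α]

lemma card_inter_biUnion_le (t : Finset α) (s : Finset ι) (f : ι → Finset α) :
    #(t ∩ s.biUnion f) ≤ ∑ i ∈ s, #(t ∩ f i) := by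
  rw [inter_biUnion]
  exact card_biUnion_le

lemma sum_card_sub_le_card_biUnion {f : ι → Finset α} {c : ℝ}
    (hf : ∀ i j, i ≠ j → (#(f i ∩ f j) : ℝ) ≤ c) (s : Finset ι) :
    ∑ i ∈ s, (#(f i) : ℝ) - c * #s * (#s - 1) / 2 ≤ #(s.biUnion f) := by
  classical
  induction s using Finset.cons_induction with
  | empty => simp
  | cons a s ha ih =>
    have overlap : (#(f a ∩ s.biUnion f) : ℝ) ≤ c * #s :=
      calc (#(f a ∩ s.biUnion f) : ℝ) ≤ ∑ j ∈ s, (#(f a ∩ f j) : ℝ) := by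
            exact_mod_cast card_inter_biUnion_le _ _ _
        _ ≤ ∑ _j ∈ s, c := sum_le_sum fun j hj ↦ hf a j (ne_of_mem_of_not_mem hj ha).symm
        _ = c * #s := by rw [sum_const, nsmul_eq_mul, mul_comm]
    have union : (#(f a ∪ s.biUnion f) : ℝ) + #(f a ∩ s.biUnion f) = #(f a) + #(s.biUnion f) := by
      exact_mod_cast card_union_add_card_inter _ _
    rw [sum_cons, card_cons, cons_eq_insert, biUnion_insert]
    push_cast
    linarith

end Finset

namespace Matrix

variable {m n R : Type*} [Fintype m] [Semiring R] [DecidableEq R]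

def colOnes (A : Matrix m n R) (j : n) : Finset m :=
  univ.filter fun i ↦ A i j = 1

lemma card_colOnes_inter [DecidableEq m] [Nontrivial R] {A : Matrix m n R}
    (hA : ∀ i j, A i j = 0 ∨ A i j = 1) (j t : n) :
    (#(A.colOnes j ∩ A.colOnes t) : R) = ∑ i, A i j * A i t := by
  unfold colOnes
  rw [← filter_and, ← sum_boole]
  refine sum_congr rfl fun i _ ↦ ?_
  rcases hA i j with h | h <;> rcases hA i t with h' | h' <;> simp [h, h']

end Matrix

lemma one_sub_div_two_mul_mul_le {q s ρ c : ℝ} (hq : 0 < q) (hs : 0 ≤ s) (hρ : ρ * (s - 1) ≤ c) :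
    (1 - c / (2 * q)) * (q * s) ≤ q * s - ρ * s * (s - 1) / 2 := by
  have expand : (1 - c / (2 * q)) * (q * s) = q * s - c * s / 2 := by
    field_simp
  rw [expand]
  nlinarith [mul_le_mul_of_nonneg_right hρ hs]

theorem stmt13_general {m n q r K : ℕ} (hq : 0 < q)
    (A : Matrix (Fin m) (Fin n) ℝ)
    (hbin : ∀ i j, A i j = 0 ∨ A i j = 1)
    (hcol : ∀ j : Fin n, (Finset.univ.filter (fun i => A i j = 1)).card = q)
    (hip : ∀ j t : Fin n, j ≠ t → ∑ i, A i j * A i t ≤ ((r - 1 : ℕ) : ℝ)) :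
    ∀ S : Finset (Fin n), S.card ≤ K →
      ((q : ℝ) * S.card - ((r - 1 : ℕ) : ℝ) * S.card * (S.card - 1) / 2 ≤
        ((@Finset.filter _ (fun i : Fin m => ∃ j ∈ S, A i j = 1) (fun _ => Finset.decidableExistsAndFinset) Finset.univ).card : ℝ)) ∧
      ((1 - (((K - 1) * (r - 1) : ℕ) : ℝ) / (2 * q)) * ((q : ℝ) * S.card) ≤
        ((@Finset.filter _ (fun i : Fin m => ∃ j ∈ S, A i j = 1) (fun _ => Finset.decidableExistsAndFinset) Finset.univ).card : ℝ)) := by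
  intro S hS
  have neighborhood : @Finset.filter _ (fun i : Fin m => ∃ j ∈ S, A i j = 1)
      (fun _ => Finset.decidableExistsAndFinset) univ = S.biUnion A.colOnes := by
    ext i
    simp [Matrix.colOnes]
  have degrees : ∑ j ∈ S, (#(A.colOnes j) : ℝ) = q * #S := by
    simp [Matrix.colOnes, hcol, mul_comm]
  have first := degrees ▸ sum_card_sub_le_card_biUnion
    (fun j t hjt ↦ (Matrix.card_colOnes_inter hbin j t).trans_le (hip j t hjt)) S
  rw [neighborhood]
  have size : (#S : ℝ) - 1 ≤ (K - 1 : ℕ) := by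
    rw [sub_le_iff_le_add]
    exact_mod_cast (by omega : #S ≤ K - 1 + 1)
  have pair_bound : ((r - 1 : ℕ) : ℝ) * (#S - 1) ≤ ((K - 1) * (r - 1) : ℕ) := by
    rw [Nat.cast_mul, mul_comm]
    exact mul_le_mul_of_nonneg_right size (Nat.cast_nonneg _)
  exact ⟨first,
    (one_sub_div_two_mul_mul_le (by exact_mod_cast hq) (#S).cast_nonneg pair_bound).trans first⟩

/-- Under the main assumption, for any set `S` of at most `K` columns, the
neighborhood `N(S)` of rows satisfies
`|N(S)| ≥ q|S| - (r-1)|S|(|S|-1)/2 ≥ (1 - (K-1)(r-1)/(2q)) · q|S|`; hence the bipartite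
graph with bi-adjacency matrix `A` is a `(K, 1-β)`-expander with
`β = (K-1)(r-1)/(2q)`, provided `β < 1`. -/
theorem stmt13 {m n q r K : ℕ} (hq : 0 < q)
    (A : Matrix (Fin m) (Fin n) ℝ)
    (hbin : ∀ i j, A i j = 0 ∨ A i j = 1)
    (hcol : ∀ j : Fin n, (Finset.univ.filter (fun i => A i j = 1)).card = q)
    (hip : ∀ j t : Fin n, j ≠ t → ∑ i, A i j * A i t ≤ ((r - 1 : ℕ) : ℝ))
    (hβ : (((K - 1) * (r - 1) : ℕ) : ℝ) / (2 * q) < 1) :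
    ∀ S : Finset (Fin n), S.card ≤ K →
      ((q : ℝ) * S.card - ((r - 1 : ℕ) : ℝ) * S.card * (S.card - 1) / 2 ≤
        ((@Finset.filter _ (fun i : Fin m => ∃ j ∈ S, A i j = 1) (fun _ => Finset.decidableExistsAndFinset) Finset.univ).card : ℝ)) ∧
      ((1 - (((K - 1) * (r - 1) : ℕ) : ℝ) / (2 * q)) * ((q : ℝ) * S.card) ≤
        ((@Finset.filter _ (fun i : Fin m => ∃ j ∈ S, A i j = 1) (fun _ => Finset.decidableExistsAndFinset) Finset.univ).card : ℝ)) :=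
  stmt13_general hq A hbin hcol hip
end

section
/- Let A ∈ {0,1}^{m×n} satisfy the main assumption with q > 2(k(r-1) + M). If x, x' ∈ Σ_k and η, η' ∈ R^m each have at most M nonzero entries, and Ax + η = Ax' + η', then x = x'. That is, k-sparse vectors are uniquely determined by measurements corrupted in at most M positions. -/
/-!
Put `z = x - x'` and `w = η' - η`, so that `A z = w` with `‖z‖₀ ≤ 2k` and `‖w‖₀ ≤ 2M`.
If `z j ≠ 0`, the `q` rows in the support of column `j` meet each other column of the support
of `z` in at most `r - 1` rows, and at most `2M` of them carry noise. Since
`q > 2k(r-1) + 2M`, some row `i` sees only column `j` of the support of `z` and no noise,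
so `0 = w i = (A z) i = z j`.
-/

open Finset Matrix

lemma card_filter_sub_ne_zero_le {ι G : Type*} [Fintype ι] [AddGroup G] [DecidableEq G]
    (f g : ι → G) : #{i | (f - g) i ≠ 0} ≤ #{i | f i ≠ 0} + #{i | g i ≠ 0} := by
  classical
  refine (card_le_card fun i hi => ?_).trans (card_union_le _ _)
  simp only [mem_filter, mem_univ, true_and, mem_union, Pi.sub_apply] at hi ⊢
  by_contra! h
  simp [h.1, h.2] at hi

lemma sum_mul_eq_card_filter_of_zero_or_one {ι R : Type*} [Fintype ι] [Semiring R]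
    [DecidableEq R] {u v : ι → R} (hu : ∀ i, u i = 0 ∨ u i = 1) (hv : ∀ i, v i = 0 ∨ v i = 1) :
    ∑ i, u i * v i = #{i | u i = 1 ∧ v i = 1} := by
  rw [natCast_card_filter]
  refine sum_congr rfl fun i _ => ?_
  rcases hu i with hui | hui <;> rcases hv i with hvi | hvi <;> simp [hui, hvi]

lemma Matrix.mulVec_apply_eq_of_row {ι κ R : Type*} [Fintype κ] [DecidableEq κ] [Semiring R]
    {A : Matrix ι κ R} {z : κ → R} {i : ι} {j : κ} (hij : A i j = 1)
    (hrow : ∀ t ≠ j, z t ≠ 0 → A i t = 0) : (A *ᵥ z) i = z j := by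
  rw [mulVec, dotProduct, sum_eq_single j _ (by simp), hij, one_mul]
  intro t _ htj
  by_cases hzt : z t = 0
  · rw [hzt, mul_zero]
  · rw [hrow t htj hzt, zero_mul]

section ZeroOneMatrix

variable {ι κ : Type*} [Fintype ι] {A : Matrix ι κ ℝ} {r : ℕ}

lemma card_filter_eq_one_and_eq_one_le (hbin : ∀ i j, A i j = 0 ∨ A i j = 1)
    (hip : ∀ j t, j ≠ t → ∑ i, A i j * A i t ≤ ((r - 1 : ℕ) : ℝ)) {j t : κ} (hjt : j ≠ t) :
    #{i | A i j = 1 ∧ A i t = 1} ≤ r - 1 := by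
  have := hip j t hjt
  rwa [sum_mul_eq_card_filter_of_zero_or_one (hbin · j) (hbin · t), Nat.cast_le] at this

theorem eq_zero_of_mulVec_eq_of_card_support_le [Fintype κ] {q : ℕ}
    (hbin : ∀ i j, A i j = 0 ∨ A i j = 1) (hcol : ∀ j, #{i | A i j = 1} = q)
    (hip : ∀ j t, j ≠ t → ∑ i, A i j * A i t ≤ ((r - 1 : ℕ) : ℝ)) {s e : ℕ}
    (hq : s * (r - 1) + e < q) {z : κ → ℝ} {w : ι → ℝ} (hz : #{t | z t ≠ 0} ≤ s)
    (hw : #{i | w i ≠ 0} ≤ e) (h : A *ᵥ z = w) : z = 0 := by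
  classical
  by_contra hne
  obtain ⟨j, hj⟩ : ∃ j, z j ≠ 0 := Function.ne_iff.mp hne
  set S : Finset κ := ({t | z t ≠ 0} : Finset κ).erase j
  have hS : #S ≤ s := card_erase_le.trans hz
  have hjS : j ∉ S := notMem_erase j _
  set B := S.biUnion fun t => ({i | A i j = 1 ∧ A i t = 1} : Finset ι)
  have hB : #B ≤ #S * (r - 1) := card_biUnion_le_card_mul _ _ _ fun t htS =>
    card_filter_eq_one_and_eq_one_le hbin hip (ne_of_mem_of_not_mem htS hjS).symm
  have hcard : #(B ∪ ({i | w i ≠ 0} : Finset ι)) < #{i | A i j = 1} := by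
    calc _ ≤ #S * (r - 1) + e := (card_union_le _ _).trans (add_le_add hB hw)
      _ < #{i | A i j = 1} := by rw [hcol]; nlinarith
  obtain ⟨i, hij, hi⟩ := exists_mem_notMem_of_card_lt_card hcard
  simp only [B, mem_filter, mem_univ, true_and, mem_union, mem_biUnion, not_or, not_exists,
    not_and, not_not] at hij hi
  have hrow : (A *ᵥ z) i = z j := mulVec_apply_eq_of_row hij fun t htj hzt =>
    (hbin i t).resolve_right (hi.1 t (by simp [S, htj, hzt]) hij)
  exact hj (by rw [← hrow, h, hi.2])

end ZeroOneMatrix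

/-- Under the main assumption with `q > 2(k(r-1)+M)`, `k`-sparse vectors
are uniquely determined by measurements corrupted in at most `M` positions: if
`x, x' ∈ Σ_k`, `‖η‖₀, ‖η'‖₀ ≤ M` and `Ax + η = Ax' + η'`, then `x = x'`. -/
theorem stmt17 {m n q r k M : ℕ}
    (A : Matrix (Fin m) (Fin n) ℝ)
    (hbin : ∀ i j, A i j = 0 ∨ A i j = 1)
    (hcol : ∀ j : Fin n, (Finset.univ.filter (fun i => A i j = 1)).card = q)
    (hip : ∀ j t : Fin n, j ≠ t → ∑ i, A i j * A i t ≤ ((r - 1 : ℕ) : ℝ))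
    (hq : 2 * (k * (r - 1) + M) < q)
    (x x' : Fin n → ℝ)
    (hx : (Finset.univ.filter (fun i => x i ≠ 0)).card ≤ k)
    (hx' : (Finset.univ.filter (fun i => x' i ≠ 0)).card ≤ k)
    (η η' : Fin m → ℝ)
    (hη : (Finset.univ.filter (fun i => η i ≠ 0)).card ≤ M)
    (hη' : (Finset.univ.filter (fun i => η' i ≠ 0)).card ≤ M)
    (heq : A.mulVec x + η = A.mulVec x' + η') :
    x = x' := by
  have hdiff : A *ᵥ (x - x') = η' - η := by
    rw [mulVec_sub, sub_eq_sub_iff_add_eq_add, heq, add_comm]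
  refine sub_eq_zero.mp (eq_zero_of_mulVec_eq_of_card_support_le hbin hcol hip
    (s := 2 * k) (e := 2 * M) (by nlinarith) ?_ ?_ hdiff)
  · exact (card_filter_sub_ne_zero_le x x').trans (by omega)
  · exact (card_filter_sub_ne_zero_le η' η).trans (by omega)
end
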